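/- arXiv:2410.23940 — 3 statements merged into one kernel-verified Lean document; each statement's English description precedes it below -/
import Mathlib

section
/- For any Hermitian matrix M and unit vectors z, z' in ℂ^d, |⟨z|M|z⟩ − ⟨z'|M|z'⟩| ≤ 2‖M‖·√(1 − |⟨z|z'⟩|²), where ‖M‖ is the operator norm. -/
/-! Multiplying `z'` by a phase changes neither side, so we may assume `⟨z|z'⟩ = t ≥ 0`.
For symmetric `M`, `⟨z|M|z⟩ - ⟨z'|M|z'⟩ = Re ⟨z - z'|M|z + z'⟩`, which is at most
`‖M‖ ‖z - z'‖ ‖z + z'‖ = ‖M‖ √((2 - 2t)(2 + 2t)) = 2 ‖M‖ √(1 - t²)`. -/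

open RCLike

section

variable {𝕜 E : Type*} [RCLike 𝕜] [NormedAddCommGroup E] [InnerProductSpace 𝕜 E]

local notation "⟪" x ", " y "⟫" => inner 𝕜 x y

theorem LinearMap.IsSymmetric.re_inner_map_self_sub_re_inner_map_self {T : E →ₗ[𝕜] E}
    (hT : T.IsSymmetric) (x y : E) :
    re ⟪x, T x⟫ - re ⟪y, T y⟫ = re ⟪x - y, T (x + y)⟫ := by
  have hcross : re ⟪y, T x⟫ = re ⟪x, T y⟫ := by
    rw [← hT, ← inner_conj_symm, conj_re]
  rw [map_add, inner_sub_left, inner_add_right, inner_add_right, map_sub, map_add, map_add,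
    hcross]
  ring

theorem ContinuousLinearMap.abs_re_inner_map_self_sub_le {T : E →L[𝕜] E}
    (hT : (T : E →ₗ[𝕜] E).IsSymmetric) (x y : E) :
    |re ⟪x, T x⟫ - re ⟪y, T y⟫| ≤ ‖T‖ * (‖x - y‖ * ‖x + y‖) := by
  have hdiff := hT.re_inner_map_self_sub_re_inner_map_self x y
  simp only [ContinuousLinearMap.coe_coe] at hdiff
  rw [hdiff]
  calc |re ⟪x - y, T (x + y)⟫| ≤ ‖⟪x - y, T (x + y)⟫‖ := abs_re_le_norm _
    _ ≤ ‖x - y‖ * ‖T (x + y)‖ := norm_inner_le_norm _ _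
    _ ≤ ‖x - y‖ * (‖T‖ * ‖x + y‖) := by gcongr; exact T.le_opNorm _
    _ = ‖T‖ * (‖x - y‖ * ‖x + y‖) := by ring

theorem inner_smul_map_smul_of_norm_eq_one (T : E →ₗ[𝕜] E) {c : 𝕜} (hc : ‖c‖ = 1) (x : E) :
    ⟪c • x, T (c • x)⟫ = ⟪x, T x⟫ := by
  rw [map_smul, inner_smul_left, inner_smul_right, ← mul_assoc, RCLike.conj_mul, hc]
  simp

theorem norm_sub_mul_norm_add_of_norm_eq_one {x y : E} (hx : ‖x‖ = 1) (hy : ‖y‖ = 1) :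
    ‖x - y‖ * ‖x + y‖ = 2 * √(1 - re ⟪x, y⟫ ^ 2) := by
  have hsq : (‖x - y‖ * ‖x + y‖) ^ 2 = (2 * √(1 - re ⟪x, y⟫ ^ 2)) ^ 2 := by
    have hre : re ⟪x, y⟫ ^ 2 ≤ 1 := by
      have := (abs_re_le_norm ⟪x, y⟫).trans (norm_inner_le_norm (𝕜 := 𝕜) x y)
      rw [hx, hy, one_mul] at this
      nlinarith [abs_le.mp this]
    rw [mul_pow, mul_pow, @norm_sub_sq 𝕜, @norm_add_sq 𝕜, hx, hy, Real.sq_sqrt (by linarith)]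
    ring
  exact (pow_left_inj₀ (by positivity) (by positivity) two_ne_zero).mp hsq

theorem exists_norm_eq_one_inner_smul_eq_norm (x y : E) :
    ∃ c : 𝕜, ‖c‖ = 1 ∧ ⟪x, c • y⟫ = ‖⟪x, y⟫‖ := by
  obtain ⟨c, hc, hcxy⟩ := exists_norm_eq_mul_self ⟪x, y⟫
  exact ⟨c, hc, by rw [inner_smul_right, hcxy]⟩

end

theorem stmt1 {d : ℕ}
    (M : EuclideanSpace ℂ (Fin d) →L[ℂ] EuclideanSpace ℂ (Fin d))
    (hM : IsSelfAdjoint M)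
    (z z' : EuclideanSpace ℂ (Fin d)) (hz : ‖z‖ = 1) (hz' : ‖z'‖ = 1) :
    |(inner ℂ z (M z) : ℂ).re - (inner ℂ z' (M z') : ℂ).re| ≤
      2 * ‖M‖ * Real.sqrt (1 - ‖(inner ℂ z z' : ℂ)‖ ^ 2) := by
  obtain ⟨c, hc, hzw⟩ := exists_norm_eq_one_inner_smul_eq_norm (𝕜 := ℂ) z z'
  have hw : ‖c • z'‖ = 1 := by rw [norm_smul, hc, hz', one_mul]
  have hphase : inner ℂ (c • z') (M (c • z')) = inner ℂ z' (M z') :=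
    inner_smul_map_smul_of_norm_eq_one (M : _ →ₗ[ℂ] _) hc z'
  have key := M.abs_re_inner_map_self_sub_le
    (ContinuousLinearMap.isSelfAdjoint_iff_isSymmetric.mp hM) z (c • z')
  rw [hphase, norm_sub_mul_norm_add_of_norm_eq_one (𝕜 := ℂ) hz hw, hzw, ofReal_re] at key
  exact key.trans_eq (by ring)
end

section
/- For any orthogonal projection P on ℂ^d and unit vectors z, z', |⟨z|P|z⟩ − ⟨z'|P|z'⟩| ≤ √(1 − |⟨z|z'⟩|²). -/
/-!
Rotating `z'` by a phase we may assume `⟪z, z'⟫` is real and nonnegative. With `a = z + z'`,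
`b = z - z'` and `Q = 1 - P`, symmetry of `P` gives
`Re ⟪a, P b⟫ = ⟪z, P z⟫ - ⟪z', P z'⟫ = -Re ⟪a, Q b⟫`, so by Cauchy–Schwarz the square of the
difference is at most `(‖P a‖ ‖Q a‖) (‖P b‖ ‖Q b‖) ≤ (‖a‖² / 2) (‖b‖² / 2) = 1 - ⟪z, z'⟫²`,
the middle step being AM-GM together with `‖P x‖² + ‖Q x‖² = ‖x‖²`.
-/

open RCLike
open scoped InnerProductSpace

variable {𝕜 E : Type*} [RCLike 𝕜] [SeminormedAddCommGroup E] [InnerProductSpace 𝕜 E]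

theorem LinearMap.IsSymmetric.re_inner_add_map_sub {T : E →ₗ[𝕜] E} (hT : T.IsSymmetric)
    (x y : E) : re ⟪x + y, T (x - y)⟫_𝕜 = re ⟪x, T x⟫_𝕜 - re ⟪y, T y⟫_𝕜 := by
  have hcross : re ⟪y, T x⟫_𝕜 = re ⟪x, T y⟫_𝕜 := by
    rw [← hT, inner_re_symm]
  simp only [map_sub, map_add, inner_add_left, inner_sub_right]
  linarith

namespace LinearMap.IsSymmetricProjection

variable {P : E →ₗ[𝕜] E} (hP : P.IsSymmetricProjection)
include hP

theorem one_sub : (1 - P).IsSymmetricProjection where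
  isIdempotentElem := hP.isIdempotentElem.one_sub
  isSymmetric := LinearMap.IsSymmetric.id.sub hP.isSymmetric

theorem inner_map_eq_inner_map_map (x y : E) : ⟪x, P y⟫_𝕜 = ⟪P x, P y⟫_𝕜 := by
  rw [hP.isSymmetric, ← Module.End.mul_apply, hP.isIdempotentElem.eq]

theorem re_inner_map_self (x : E) : re ⟪x, P x⟫_𝕜 = ‖P x‖ ^ 2 := by
  rw [hP.inner_map_eq_inner_map_map, inner_self_eq_norm_sq]

theorem norm_sq_add_norm_sq_one_sub (x : E) : ‖P x‖ ^ 2 + ‖(1 - P) x‖ ^ 2 = ‖x‖ ^ 2 := by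
  rw [← hP.re_inner_map_self, ← hP.one_sub.re_inner_map_self, ← map_add, ← inner_add_right,
    ← LinearMap.add_apply, add_sub_cancel, Module.End.one_apply, inner_self_eq_norm_sq]

theorem norm_mul_norm_one_sub_le (x : E) : ‖P x‖ * ‖(1 - P) x‖ ≤ ‖x‖ ^ 2 / 2 := by
  nlinarith [hP.norm_sq_add_norm_sq_one_sub x, sq_nonneg (‖P x‖ - ‖(1 - P) x‖)]

theorem abs_re_inner_map_self_sub_le (x y : E) :
    |re ⟪x, P x⟫_𝕜 - re ⟪y, P y⟫_𝕜| ≤ ‖P (x + y)‖ * ‖P (x - y)‖ :=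
  calc |re ⟪x, P x⟫_𝕜 - re ⟪y, P y⟫_𝕜| = |re ⟪P (x + y), P (x - y)⟫_𝕜| := by
        rw [← hP.isSymmetric.re_inner_add_map_sub, hP.inner_map_eq_inner_map_map]
    _ ≤ ‖⟪P (x + y), P (x - y)⟫_𝕜‖ := abs_re_le_norm _
    _ ≤ ‖P (x + y)‖ * ‖P (x - y)‖ := norm_inner_le_norm _ _

theorem sq_re_inner_map_self_sub_le {x y : E} (hx : ‖x‖ = 1) (hy : ‖y‖ = 1) :
    (re ⟪x, P x⟫_𝕜 - re ⟪y, P y⟫_𝕜) ^ 2 ≤ 1 - re ⟪x, y⟫_𝕜 ^ 2 := by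
  set δ := re ⟪x, P x⟫_𝕜 - re ⟪y, P y⟫_𝕜
  have hP_bound := hP.abs_re_inner_map_self_sub_le x y
  -- for `1 - P` the difference changes sign, since `x` and `y` have the same norm
  have hQ_bound : |δ| ≤ ‖(1 - P) (x + y)‖ * ‖(1 - P) (x - y)‖ := by
    have hx' := hP.norm_sq_add_norm_sq_one_sub x
    have hy' := hP.norm_sq_add_norm_sq_one_sub y
    rw [← hP.re_inner_map_self, hx] at hx'
    rw [← hP.re_inner_map_self, hy] at hy'
    have := hP.one_sub.abs_re_inner_map_self_sub_le x y
    rwa [hP.one_sub.re_inner_map_self, hP.one_sub.re_inner_map_self, abs_sub_comm,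
      show ‖(1 - P) y‖ ^ 2 - ‖(1 - P) x‖ ^ 2 = δ by linarith] at this
  have hsum : ‖x + y‖ ^ 2 = 2 + 2 * re ⟪x, y⟫_𝕜 := by rw [norm_add_sq (𝕜 := 𝕜), hx, hy]; ring
  have hdiff : ‖x - y‖ ^ 2 = 2 - 2 * re ⟪x, y⟫_𝕜 := by rw [norm_sub_sq (𝕜 := 𝕜), hx, hy]; ring
  calc δ ^ 2 = |δ| * |δ| := by rw [← sq_abs, sq]
    _ ≤ (‖P (x + y)‖ * ‖P (x - y)‖) * (‖(1 - P) (x + y)‖ * ‖(1 - P) (x - y)‖) :=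
        mul_le_mul hP_bound hQ_bound (abs_nonneg _) (by positivity)
    _ = (‖P (x + y)‖ * ‖(1 - P) (x + y)‖) * (‖P (x - y)‖ * ‖(1 - P) (x - y)‖) := by ring
    _ ≤ (‖x + y‖ ^ 2 / 2) * (‖x - y‖ ^ 2 / 2) :=
        mul_le_mul (hP.norm_mul_norm_one_sub_le _) (hP.norm_mul_norm_one_sub_le _)
          (by positivity) (by positivity)
    _ = 1 - re ⟪x, y⟫_𝕜 ^ 2 := by rw [hsum, hdiff]; ring

end LinearMap.IsSymmetricProjection

theorem inner_smul_map_smul_self {P : E →ₗ[𝕜] E} {c : 𝕜} (hc : ‖c‖ = 1) (x : E) :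
    ⟪c • x, P (c • x)⟫_𝕜 = ⟪x, P x⟫_𝕜 := by
  rw [map_smul, inner_smul_left, inner_smul_right, ← mul_assoc, RCLike.conj_mul, hc,
    ofReal_one, one_pow, one_mul]

theorem stmt2 {d : ℕ}
    (P : EuclideanSpace ℂ (Fin d) →L[ℂ] EuclideanSpace ℂ (Fin d))
    (hP : IsSelfAdjoint P) (hP2 : P ∘L P = P)
    (z z' : EuclideanSpace ℂ (Fin d)) (hz : ‖z‖ = 1) (hz' : ‖z'‖ = 1) :
    |(inner ℂ z (P z) : ℂ).re - (inner ℂ z' (P z') : ℂ).re| ≤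
      Real.sqrt (1 - ‖(inner ℂ z z' : ℂ)‖ ^ 2) := by
  have hproj : (P : EuclideanSpace ℂ (Fin d) →ₗ[ℂ] _).IsSymmetricProjection :=
    ContinuousLinearMap.isStarProjection_iff_isSymmetricProjection.mp ⟨hP2, hP⟩
  obtain ⟨c, hc, hcz⟩ := RCLike.exists_norm_eq_mul_self (inner ℂ z z')
  have hw : ‖c • z'‖ = 1 := by rw [norm_smul, hc, hz', one_mul]
  have hzw : re ⟪z, c • z'⟫_ℂ = ‖⟪z, z'⟫_ℂ‖ := by
    rw [inner_smul_right, ← hcz, ofReal_re]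
  apply Real.abs_le_sqrt
  have := hproj.sq_re_inner_map_self_sub_le hz hw
  rwa [hzw, inner_smul_map_smul_self hc, ContinuousLinearMap.coe_coe] at this
end

section
/- Let M be an orthogonal projection on ℂ^d and let A be a Hermitian traceless operator of the form λ(|ξ₀⟩⟨ξ₀| − |ξ₁⟩⟨ξ₁|) with λ ≥ 0 and ξ₀ ⊥ ξ₁ unit vectors. Then |Tr(M·A)| ≤ λ = ½‖A‖_Tr. -/
open Matrix
open scoped ComplexOrder

/-- The trace norm of a matrix: `Tr √(Aᴴ A)`, the sum of singular values. -/
noncomputable def traceNorm {d : ℕ} (A : Matrix (Fin d) (Fin d) ℂ) : ℝ :=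
  (((Matrix.posSemidef_conjTranspose_mul_self A).1.eigenvectorUnitary.1 *
      Matrix.diagonal (fun i => ((Real.sqrt ((Matrix.posSemidef_conjTranspose_mul_self A).1.eigenvalues i) : ℝ) : ℂ)) *
      (star (Matrix.posSemidef_conjTranspose_mul_self A).1.eigenvectorUnitary : Matrix (Fin d) (Fin d) ℂ)).trace).re

/-- The rank-one projector `|z⟩⟨z|`. -/
noncomputable def outer {d : ℕ} (z : Fin d → ℂ) : Matrix (Fin d) (Fin d) ℂ :=
  Matrix.vecMulVec z (star z)

/-!
With `Pᵢ = |ξᵢ⟩⟨ξᵢ|`, `Tr(M A) = λ (⟨ξ₀, M ξ₀⟩ - ⟨ξ₁, M ξ₁⟩)`, and both expectation values lie in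
`[0, 1]` because `0 ≤ M ≤ 1`; so `|Tr(M A)| ≤ λ`. Since `P₀, P₁` are orthogonal projections,
`Aᴴ A = λ² (P₀ - P₁)² = (λ (P₀ + P₁))²` with `λ (P₀ + P₁) ≥ 0`, so by uniqueness of positive square
roots `|A| = λ (P₀ + P₁)`, whose trace is `2 λ`.
-/

open scoped MatrixOrder

lemma IsStarProjection.sub_mul_self_eq_add {R : Type*} [Ring R] [StarRing R] {p q : R}
    (hp : IsStarProjection p) (hq : IsStarProjection q) (hpq : p * q = 0) :
    (p - q) * (p - q) = p + q := by
  have hqp : q * p = 0 := by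
    simpa [hp.isSelfAdjoint.star_eq, hq.isSelfAdjoint.star_eq] using congr(star $(hpq))
  rw [sub_mul, mul_sub, mul_sub, hp.isIdempotentElem.eq, hq.isIdempotentElem.eq, hpq, hqp]
  abel

lemma RCLike.norm_sub_le_one_of_mem_Icc {𝕜 : Type*} [RCLike 𝕜] {a b : 𝕜}
    (ha : a ∈ Set.Icc 0 1) (hb : b ∈ Set.Icc 0 1) : ‖a - b‖ ≤ 1 := by
  have real_of_mem : ∀ z : 𝕜, z ∈ Set.Icc 0 1 → z = (re z : 𝕜) ∧ re z ∈ Set.Icc 0 1 := by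
    rintro z ⟨h0, h1⟩
    rw [RCLike.le_iff_re_im] at h0 h1
    refine ⟨RCLike.ext (by simp) (by simp [← h0.2]), ?_, ?_⟩ <;> simp_all
  obtain ⟨ha', ha0, ha1⟩ := real_of_mem a ha
  obtain ⟨hb', hb0, hb1⟩ := real_of_mem b hb
  rw [ha', hb', ← RCLike.ofReal_sub, RCLike.norm_ofReal, abs_sub_le_iff]
  constructor <;> linarith

lemma IsStarProjection.dotProduct_mulVec_mem_Icc {𝕜 n : Type*} [RCLike 𝕜] [Fintype n]
    [DecidableEq n] {M : Matrix n n 𝕜} (hM : IsStarProjection M) {ξ : n → 𝕜}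
    (hξ : star ξ ⬝ᵥ ξ = 1) : star ξ ⬝ᵥ M *ᵥ ξ ∈ Set.Icc 0 1 := by
  refine ⟨hM.nonneg.posSemidef.dotProduct_mulVec_nonneg ξ, ?_⟩
  simpa [sub_mulVec, dotProduct_sub, hξ] using
    hM.one_sub_nonneg.posSemidef.dotProduct_mulVec_nonneg ξ

lemma isStarProjection_outer {d : ℕ} {ξ : Fin d → ℂ} (hξ : star ξ ⬝ᵥ ξ = 1) :
    IsStarProjection (outer ξ) where
  isIdempotentElem := by
    rw [IsIdempotentElem, outer, vecMulVec_mul_vecMulVec, hξ, one_smul]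
  isSelfAdjoint := (posSemidef_vecMulVec_self_star ξ).isHermitian

lemma outer_mul_outer_of_orthogonal {d : ℕ} {ξ η : Fin d → ℂ} (h : star ξ ⬝ᵥ η = 0) :
    outer ξ * outer η = 0 := by
  rw [outer, outer, vecMulVec_mul_vecMulVec, h, zero_smul, vecMulVec_zero]

lemma trace_outer {d : ℕ} (ξ : Fin d → ℂ) : (outer ξ).trace = star ξ ⬝ᵥ ξ := by
  rw [outer, trace_vecMulVec, dotProduct_comm]

lemma trace_mul_outer {d : ℕ} (M : Matrix (Fin d) (Fin d) ℂ) (ξ : Fin d → ℂ) :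
    (M * outer ξ).trace = star ξ ⬝ᵥ M *ᵥ ξ := by
  rw [outer, mul_vecMulVec, trace_vecMulVec, dotProduct_comm]

lemma traceNorm_eq_re_trace_sqrt {d : ℕ} (A : Matrix (Fin d) (Fin d) ℂ) :
    traceNorm A = (CFC.sqrt (Aᴴ * A)).trace.re := by
  rw [CFC.sqrt_eq_real_sqrt _ (posSemidef_conjTranspose_mul_self A).nonneg, cfcₙ_eq_cfc,
    (posSemidef_conjTranspose_mul_self A).1.cfc_eq, traceNorm]
  simp [IsHermitian.cfc, Function.comp_def, Unitary.conjStarAlgAut_apply]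

lemma traceNorm_eq_re_trace_of_mul_self_eq {d : ℕ} {A B : Matrix (Fin d) (Fin d) ℂ}
    (hB : B.PosSemidef) (hBA : B * B = Aᴴ * A) : traceNorm A = B.trace.re := by
  rw [traceNorm_eq_re_trace_sqrt, CFC.sqrt_unique hBA hB.nonneg]

lemma traceNorm_smul_sub_of_isStarProjection {d : ℕ} {P Q : Matrix (Fin d) (Fin d) ℂ}
    (hP : IsStarProjection P) (hQ : IsStarProjection Q) (hPQ : P * Q = 0) {l : ℝ} (hl : 0 ≤ l) :
    traceNorm ((l : ℂ) • (P - Q)) = l * (P.trace + Q.trace).re := by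
  have hPQ_add := hP.add hQ hPQ
  have hB : ((l : ℂ) • (P + Q)).PosSemidef :=
    hPQ_add.nonneg.posSemidef.smul (Complex.zero_le_real.mpr hl)
  have hBA : ((l : ℂ) • (P + Q)) * ((l : ℂ) • (P + Q)) =
      ((l : ℂ) • (P - Q))ᴴ * ((l : ℂ) • (P - Q)) := by
    rw [conjTranspose_smul, conjTranspose_sub, ← star_eq_conjTranspose,
      hP.isSelfAdjoint.star_eq, ← star_eq_conjTranspose, hQ.isSelfAdjoint.star_eq,
      Complex.star_def, Complex.conj_ofReal, smul_mul_smul, smul_mul_smul,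
      hPQ_add.isIdempotentElem.eq, hP.sub_mul_self_eq_add hQ hPQ]
  rw [traceNorm_eq_re_trace_of_mul_self_eq hB hBA, trace_smul, trace_add, smul_eq_mul,
    Complex.re_ofReal_mul]

lemma norm_trace_mul_smul_outer_sub_outer_le {d : ℕ} {M : Matrix (Fin d) (Fin d) ℂ}
    (hM : IsStarProjection M) {ξ₀ ξ₁ : Fin d → ℂ} (hξ₀ : star ξ₀ ⬝ᵥ ξ₀ = 1)
    (hξ₁ : star ξ₁ ⬝ᵥ ξ₁ = 1) {l : ℝ} (hl : 0 ≤ l) :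
    ‖(M * ((l : ℂ) • (outer ξ₀ - outer ξ₁))).trace‖ ≤ l := by
  rw [Matrix.mul_smul, trace_smul, mul_sub, trace_sub, trace_mul_outer, trace_mul_outer,
    smul_eq_mul, norm_mul, Complex.norm_real, Real.norm_of_nonneg hl]
  exact mul_le_of_le_one_right hl <| RCLike.norm_sub_le_one_of_mem_Icc
    (hM.dotProduct_mulVec_mem_Icc hξ₀) (hM.dotProduct_mulVec_mem_Icc hξ₁)

theorem stmt11 {d : ℕ} (M : Matrix (Fin d) (Fin d) ℂ)
    (hM : M.IsHermitian) (hM2 : M * M = M)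
    (ξ₀ ξ₁ : Fin d → ℂ) (l : ℝ) (hl : 0 ≤ l)
    (hξ₀ : dotProduct (star ξ₀) ξ₀ = 1)
    (hξ₁ : dotProduct (star ξ₁) ξ₁ = 1)
    (horth : dotProduct (star ξ₀) ξ₁ = 0)
    (A : Matrix (Fin d) (Fin d) ℂ)
    (hA : A = (l : ℂ) • (outer ξ₀ - outer ξ₁)) :
    ‖(M * A).trace‖ ≤ l ∧ l = traceNorm A / 2 := by
  subst hA
  refine ⟨norm_trace_mul_smul_outer_sub_outer_le ⟨hM2, hM.isSelfAdjoint⟩ hξ₀ hξ₁ hl, ?_⟩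
  rw [traceNorm_smul_sub_of_isStarProjection (isStarProjection_outer hξ₀)
    (isStarProjection_outer hξ₁) (outer_mul_outer_of_orthogonal horth) hl, trace_outer,
    trace_outer, hξ₀, hξ₁]
  norm_num
end
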